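/- For the operators H'_{2m+1} = (1/2) ∑_{k∈Z} (-1)^{k+1} φ_k φ_{-k-(2m+1)} built from neutral fermions φ_k with φ_m φ_n + φ_n φ_m = (-1)^m δ_{m+n,0}, the commutation relation [H'_{2m+1}, H'_{2n+1}] = ((2m+1)/2) δ_{m+n+1, 0} · c holds (equivalently, [H'_a, H'_b] = (a/2) δ_{a+b,0} c for odd a, b), where c acts as the identity on the Fock space. -/

import Mathlib

/-!
For odd `a` the anticommutation relations give `[H'_a, φ_k] = φ_{k-a}`, so `H'_a` acts as a
derivation on the pair terms `(-1)^{k+1} φ_k φ_{-k-b}` of `H'_b`. On a fixed vector this turns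
`[H'_a, H'_b] v` into half the difference of two truncated sums of the pair terms of `H'_{a+b}`,
over windows `[-N, N]` and `[-N-a, N-a]`. These pair terms vanish for large `k` and equal
`-δ_{a+b,0} v` for small `k` (vacuum condition), so the difference of the windows is
`a δ_{a+b,0} v`: the central term is a boundary effect of the truncation.
-/

open Finset

theorem sum_Icc_eq_zsmul_add_of_eventually {A : Type*} [AddCommGroup A] {f : ℤ → A} {w : A}
    {L U : ℤ} (hlow : ∀ k < L, f k = w) (hup : ∀ k, U < k → f k = 0)
    {l u : ℤ} (hl : l ≤ L) (hLu : L ≤ u) (hu : U ≤ u) :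
    ∑ k ∈ Icc l u, f k = (L - l) • w + ∑ k ∈ Icc L U, f k := by
  have hsplit : Icc l u = Ico l L ∪ Icc L u := by
    ext k; simp only [mem_Icc, mem_Ico, mem_union]; omega
  have hdisj : Disjoint (Ico l L) (Icc L u) :=
    disjoint_left.2 fun k h₁ h₂ => by simp only [mem_Icc, mem_Ico] at h₁ h₂; omega
  have hbelow : ∑ k ∈ Ico l L, f k = (L - l) • w := by
    rw [sum_congr rfl fun k hk => hlow k (mem_Ico.1 hk).2, sum_const, Int.card_Ico,
      ← natCast_zsmul, Int.toNat_of_nonneg (by omega)]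
  have habove : ∑ k ∈ Icc L u, f k = ∑ k ∈ Icc L U, f k :=
    (sum_subset (Icc_subset_Icc le_rfl hu) fun k hk hk' =>
      hup k (by simp only [mem_Icc] at hk hk'; omega)).symm
  rw [hsplit, sum_union hdisj, hbelow, habove]

theorem sum_Icc_sub_sum_shifted_Icc_of_eventually {A : Type*} [AddCommGroup A] {f : ℤ → A} {w : A}
    {L U : ℤ} (hlow : ∀ k < L, f k = w) (hup : ∀ k, U < k → f k = 0) (hLU : L ≤ U)
    {l u a : ℤ} (hl : l ≤ L) (hla : l - a ≤ L) (hu : U ≤ u) (hua : U ≤ u - a) :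
    ∑ k ∈ Icc l u, f k - ∑ k ∈ Icc (l - a) (u - a), f k = -(a • w) := by
  rw [sum_Icc_eq_zsmul_add_of_eventually hlow hup hl (by omega) hu,
    sum_Icc_eq_zsmul_add_of_eventually hlow hup hla (by omega) hua]
  module

theorem sum_Icc_comp_sub {A : Type*} [AddCommMonoid A] (f : ℤ → A) (l u a : ℤ) :
    ∑ k ∈ Icc l u, f (k - a) = ∑ k ∈ Icc (l - a) (u - a), f k := by
  simpa using (sum_map (Icc (l - a) (u - a)) (addRightEmbedding a) fun k => f (k - a))

section NeutralFermion

variable {M : Type*} [AddCommGroup M] [Module ℂ M]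

def NeutralFermionRelations (φ : ℤ → M →ₗ[ℂ] M) : Prop :=
  ∀ (m n : ℤ) (v : M), φ m (φ n v) + φ n (φ m v) = ((-1 : ℂ) ^ m) • (if m + n = 0 then v else 0)

noncomputable def pairTerm (φ : ℤ → M →ₗ[ℂ] M) (a k : ℤ) (v : M) : M :=
  (-1 : ℂ) ^ (k + 1) • φ k (φ (-k - a) v)

def HasPairExpansion (φ H : ℤ → M →ₗ[ℂ] M) : Prop :=
  ∀ (m : ℤ) (v : M), ∃ N₀ : ℕ, ∀ N ≥ N₀,
    H m v = (1/2 : ℂ) • ∑ k ∈ Icc (-(N : ℤ)) N, pairTerm φ (2 * m + 1) k v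

variable {φ H : ℤ → M →ₗ[ℂ] M}

theorem NeutralFermionRelations.commutator_pair (hφ : NeutralFermionRelations φ)
    (i j k : ℤ) (v : M) :
    φ i (φ j (φ k v)) - φ k (φ i (φ j v)) =
      (-1 : ℂ) ^ j • (if j + k = 0 then φ i v else 0)
        - (-1 : ℂ) ^ i • (if i + k = 0 then φ j v else 0) := by
  have hsplit : φ i (φ j (φ k v)) - φ k (φ i (φ j v)) =
      φ i (φ j (φ k v) + φ k (φ j v)) - (φ i (φ k (φ j v)) + φ k (φ i (φ j v))) := by
    rw [map_add]; abel
  rw [hsplit, hφ j k, hφ i k, map_smul, apply_ite (φ i), map_zero]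

theorem NeutralFermionRelations.commutator_pairTerm (hφ : NeutralFermionRelations φ)
    {a : ℤ} (ha : Odd a) (j k : ℤ) (v : M) :
    pairTerm φ a j (φ k v) - φ k (pairTerm φ a j v) =
      (if j = k - a then φ (k - a) v else 0) + (if j = -k then φ (k - a) v else 0) := by
  obtain ⟨t, rfl⟩ := ha
  rw [pairTerm, pairTerm, map_smul, ← smul_sub, hφ.commutator_pair, smul_sub, smul_ite, smul_ite,
    smul_zero, smul_zero, smul_smul, smul_smul, ← zpow_add₀ (by norm_num),
    ← zpow_add₀ (by norm_num), Even.neg_one_zpow ⟨-t, by ring⟩,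
    Odd.neg_one_zpow ⟨j, by ring⟩]
  simp only [show -j - (2 * t + 1) + k = 0 ↔ j = k - (2 * t + 1) by omega,
    show j + k = 0 ↔ j = -k by omega]
  rw [one_smul, neg_one_smul, sub_neg_eq_add]
  congr 1
  · split_ifs with h
    · rw [h]
    · rfl
  · split_ifs with h
    · rw [h, neg_neg]
    · rfl

theorem HasPairExpansion.commutator_apply (hφ : NeutralFermionRelations φ)
    (hH : HasPairExpansion φ H) (m k : ℤ) (v : M) :
    H m (φ k v) - φ k (H m v) = φ (k - (2 * m + 1)) v := by
  obtain ⟨N₁, h₁⟩ := hH m (φ k v)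
  obtain ⟨N₂, h₂⟩ := hH m v
  let N : ℕ := max (max N₁ N₂) (k.natAbs + (2 * m + 1).natAbs)
  rw [h₁ N (by omega), h₂ N (by omega), map_smul, map_sum, ← smul_sub, ← sum_sub_distrib]
  simp only [hφ.commutator_pairTerm (odd_two_mul_add_one m), sum_add_distrib, sum_ite_eq', mem_Icc]
  rw [if_pos (by omega), if_pos (by omega)]
  module

theorem HasPairExpansion.commutator_apply_apply (hφ : NeutralFermionRelations φ)
    (hH : HasPairExpansion φ H) (m i j : ℤ) (v : M) :
    H m (φ i (φ j v)) - φ i (φ j (H m v)) =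
      φ (i - (2 * m + 1)) (φ j v) + φ i (φ (j - (2 * m + 1)) v) := by
  rw [← hH.commutator_apply hφ, ← hH.commutator_apply hφ, map_sub]
  abel

theorem HasPairExpansion.commutator_pairTerm (hφ : NeutralFermionRelations φ)
    (hH : HasPairExpansion φ H) (m b k : ℤ) (v : M) :
    H m (pairTerm φ b k v) - pairTerm φ b k (H m v) =
      pairTerm φ (2 * m + 1 + b) k v - pairTerm φ (2 * m + 1 + b) (k - (2 * m + 1)) v := by
  have hsign : (-1 : ℂ) ^ (k - (2 * m + 1) + 1) = -(-1 : ℂ) ^ (k + 1) := by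
    rw [show k - (2 * m + 1) + 1 = (k + 1) + (-2 * m - 1) by ring, zpow_add₀ (by norm_num),
      (show Odd (-2 * m - 1) from ⟨-m - 1, by ring⟩).neg_one_zpow, mul_neg_one]
  rw [pairTerm, pairTerm, pairTerm, pairTerm, map_smul, ← smul_sub,
    hH.commutator_apply_apply hφ, hsign, show -(k - (2 * m + 1)) - (2 * m + 1 + b) = -k - b by ring,
    show -k - b - (2 * m + 1) = -k - (2 * m + 1 + b) by ring]
  module

theorem pairTerm_eq_zero {v : M} {L : ℤ} (hv : ∀ k < L, φ k v = 0) {c k : ℤ} (hk : -k - c < L) :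
    pairTerm φ c k v = 0 := by
  rw [pairTerm, hv _ hk, map_zero, smul_zero]

theorem NeutralFermionRelations.pairTerm_of_lt (hφ : NeutralFermionRelations φ) {v : M} {L : ℤ}
    (hv : ∀ k < L, φ k v = 0) (c : ℤ) {k : ℤ} (hk : k < L) :
    pairTerm φ c k v = -(if c = 0 then v else 0) := by
  have h := hφ k (-k - c) v
  rw [hv k hk, map_zero, add_zero] at h
  rw [pairTerm, h, smul_smul, ← zpow_add₀ (by norm_num),
    (show Odd (k + 1 + k) from ⟨k, by ring⟩).neg_one_zpow, neg_one_smul]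
  simp only [show k + (-k - c) = 0 ↔ c = 0 by omega]

end NeutralFermion

/-- For neutral fermions `φ_k` (with `φ_m φ_n + φ_n φ_m = (-1)^m δ_{m+n,0}`) acting on a
Fock-type space, and operators `H'_{2m+1}` given on each vector by the (eventually stable)
truncated sums `(1/2) ∑_k (-1)^{k+1} φ_k φ_{-k-(2m+1)}`, one has the Heisenberg commutation
relation `[H'_{2m+1}, H'_{2n+1}] = ((2m+1)/2) δ_{m+n+1,0} · id`. -/
theorem stmt6 (M : Type*) [AddCommGroup M] [Module ℂ M]
    (φ : ℤ → M →ₗ[ℂ] M)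
    (hrel : ∀ (m n : ℤ) (v : M),
      φ m (φ n v) + φ n (φ m v) = ((-1 : ℂ) ^ m) • (if m + n = 0 then v else 0))
    (hfock : ∀ v : M, ∃ N : ℤ, ∀ k < N, φ k v = 0)
    (H : ℤ → M →ₗ[ℂ] M)
    (hH : ∀ (m : ℤ) (v : M), ∃ N₀ : ℕ, ∀ N ≥ N₀,
      H m v = (1/2 : ℂ) • ∑ k ∈ Finset.Icc (-(N : ℤ)) (N : ℤ),
        ((-1 : ℂ) ^ (k + 1)) • φ k (φ (-k - (2*m+1)) v)) :
    ∀ (m n : ℤ) (v : M),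
      H m (H n v) - H n (H m v) =
        (((2*m+1 : ℤ) : ℂ)/2) • (if m + n + 1 = 0 then v else 0) := by
  intro m n v
  have hφ : NeutralFermionRelations φ := hrel
  have hH' : HasPairExpansion φ H := hH
  obtain ⟨L, hL⟩ := hfock v
  obtain ⟨N₁, h₁⟩ := hH' n v
  obtain ⟨N₂, h₂⟩ := hH' n (H m v)
  let Q : ℤ := L.natAbs + (m + n + 1).natAbs * 2
  let N : ℕ := max (max N₁ N₂) (L.natAbs + (m + n + 1).natAbs * 2 + (2 * m + 1).natAbs)
  have hcomm : H m (H n v) - H n (H m v) = (1/2 : ℂ) •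
      ∑ k ∈ Icc (-(N : ℤ)) N, (pairTerm φ (2 * m + 1 + (2 * n + 1)) k v -
        pairTerm φ (2 * m + 1 + (2 * n + 1)) (k - (2 * m + 1)) v) := by
    rw [h₁ N (by omega), h₂ N (by omega), map_smul, map_sum, ← smul_sub, ← sum_sub_distrib]
    simp only [hH'.commutator_pairTerm hφ]
  rw [hcomm, sum_sub_distrib, sum_Icc_comp_sub (fun k => pairTerm φ (2 * m + 1 + (2 * n + 1)) k v),
    sum_Icc_sub_sum_shifted_Icc_of_eventually (L := -Q) (U := Q)
      (fun k hk => hφ.pairTerm_of_lt hL _ (by omega)) (fun k hk => pairTerm_eq_zero hL (by omega))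
      (by omega) (by omega) (by omega) (by omega) (by omega)]
  simp only [show 2 * m + 1 + (2 * n + 1) = 0 ↔ m + n + 1 = 0 by omega]
  module
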